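/- Let A ∈ ℝ^{n×n}, B ∈ ℝ^{n×m}, C2 ∈ ℝ^{p×n}, D2 ∈ ℝ^{p×m} with D2ᵀC2 = 0 and D2ᵀD2 = I_m. Let λ > 0, c > 0, and suppose P > 0 (symmetric positive definite) satisfies AᵀP + PA + (c²λ⁴ − 2cλ)PBBᵀP + λ⁴C2ᵀC2 < 0. Then with F := −cBᵀP, the Lyapunov-type inequality (A + λBF)ᵀP + P(A + λBF) + (λ²C2 + λ²D2F)ᵀ(λ²C2 + λ²D2F) < 0 holds. -/

import Mathlib

/-!
With `F = -c Bᵀ P` and `P` symmetric, the closed-loop Lyapunov matrix is *equal* to the Riccati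
matrix: the state term contributes `AᵀP + PA - 2cλ PBBᵀP`, and since `D₂ᵀC₂ = 0`, `D₂ᵀD₂ = I` the
output term is `λ⁴ (C₂ᵀC₂ + FᵀF) = λ⁴ C₂ᵀC₂ + c²λ⁴ PBBᵀP`.
-/

open Matrix

variable {ι κ μ R : Type*} [CommRing R]

theorem Matrix.transpose_mul_self_add_mul_of_orthogonal [Fintype κ] [Fintype μ] [DecidableEq κ]
    {C : Matrix μ ι R} {D : Matrix μ κ R} (hDC : Dᵀ * C = 0) (hDD : Dᵀ * D = 1)
    (F : Matrix κ ι R) :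
    (C + D * F)ᵀ * (C + D * F) = Cᵀ * C + Fᵀ * F := by
  have hCD : Cᵀ * D = 0 := by
    rw [← transpose_transpose (Cᵀ * D), transpose_mul, transpose_transpose, hDC, transpose_zero]
  simp only [transpose_add, transpose_mul, Matrix.add_mul, Matrix.mul_add, Matrix.mul_assoc]
  simp only [← Matrix.mul_assoc Dᵀ, ← Matrix.mul_assoc Cᵀ, hDC, hCD, hDD, Matrix.one_mul,
    Matrix.zero_mul, Matrix.mul_zero, add_zero, zero_add]

section StateFeedback

variable [Fintype ι] [Fintype κ] {P : Matrix ι ι R} (hP : Pᵀ = P) {B : Matrix ι κ R} {c : R}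
  {F : Matrix κ ι R}
include hP

theorem lyapunov_add_smul_mul_feedback (hF : F = -(c • (Bᵀ * P))) (A : Matrix ι ι R) (lam : R) :
    (A + lam • (B * F))ᵀ * P + P * (A + lam • (B * F))
      = Aᵀ * P + P * A - (2 * c * lam) • (P * B * Bᵀ * P) := by
  subst hF
  simp only [transpose_add, transpose_smul, transpose_mul, transpose_neg, transpose_transpose, hP,
    Matrix.add_mul, Matrix.mul_add, Matrix.smul_mul, Matrix.mul_smul, Matrix.mul_neg,
    Matrix.neg_mul, Matrix.mul_assoc]
  module

theorem transpose_mul_self_feedback (hF : F = -(c • (Bᵀ * P))) :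
    Fᵀ * F = c ^ 2 • (P * B * Bᵀ * P) := by
  subst hF
  simp only [transpose_neg, transpose_smul, transpose_mul, hP, transpose_transpose,
    Matrix.neg_mul, Matrix.mul_neg, Matrix.smul_mul, Matrix.mul_smul, Matrix.mul_assoc]
  module

end StateFeedback

theorem riccati_implies_lyapunov_general {n m p : ℕ}
    (A : Matrix (Fin n) (Fin n) ℝ) (B : Matrix (Fin n) (Fin m) ℝ)
    (C2 : Matrix (Fin p) (Fin n) ℝ) (D2 : Matrix (Fin p) (Fin m) ℝ)
    (hDC : D2ᵀ * C2 = 0) (hDD : D2ᵀ * D2 = 1)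
    (lam c : ℝ)
    (P : Matrix (Fin n) (Fin n) ℝ) (hP : P.PosDef)
    (hric : (-(Aᵀ * P + P * A + (c ^ 2 * lam ^ 4 - 2 * c * lam) • (P * B * Bᵀ * P)
        + lam ^ 4 • (C2ᵀ * C2))).PosDef)
    (F : Matrix (Fin m) (Fin n) ℝ) (hF : F = -(c • (Bᵀ * P))) :
    (-((A + lam • (B * F))ᵀ * P + P * (A + lam • (B * F))
      + (lam ^ 2 • C2 + lam ^ 2 • (D2 * F))ᵀ
        * (lam ^ 2 • C2 + lam ^ 2 • (D2 * F)))).PosDef := by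
  have hPt : Pᵀ = P := hP.isHermitian
  have hOutput : (lam ^ 2 • C2 + lam ^ 2 • (D2 * F))ᵀ * (lam ^ 2 • C2 + lam ^ 2 • (D2 * F))
      = lam ^ 4 • (C2ᵀ * C2) + (c ^ 2 * lam ^ 4) • (P * B * Bᵀ * P) := by
    rw [← smul_add, transpose_smul, Matrix.smul_mul, Matrix.mul_smul, smul_smul,
      transpose_mul_self_add_mul_of_orthogonal hDC hDD, transpose_mul_self_feedback hPt hF]
    module
  rw [hOutput, lyapunov_add_smul_mul_feedback hPt hF]
  convert hric using 2
  module

theorem riccati_implies_lyapunov {n m p : ℕ}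
    (A : Matrix (Fin n) (Fin n) ℝ) (B : Matrix (Fin n) (Fin m) ℝ)
    (C2 : Matrix (Fin p) (Fin n) ℝ) (D2 : Matrix (Fin p) (Fin m) ℝ)
    (hDC : D2ᵀ * C2 = 0) (hDD : D2ᵀ * D2 = 1)
    (lam c : ℝ) (hlam : 0 < lam) (hc : 0 < c)
    (P : Matrix (Fin n) (Fin n) ℝ) (hP : P.PosDef)
    (hric : (-(Aᵀ * P + P * A + (c ^ 2 * lam ^ 4 - 2 * c * lam) • (P * B * Bᵀ * P)
        + lam ^ 4 • (C2ᵀ * C2))).PosDef)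
    (F : Matrix (Fin m) (Fin n) ℝ) (hF : F = -(c • (Bᵀ * P))) :
    (-((A + lam • (B * F))ᵀ * P + P * (A + lam • (B * F))
      + (lam ^ 2 • C2 + lam ^ 2 • (D2 * F))ᵀ
        * (lam ^ 2 • C2 + lam ^ 2 • (D2 * F)))).PosDef :=
  riccati_implies_lyapunov_general A B C2 D2 hDC hDD lam c P hP hric F hF
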